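/- arXiv:1101.0587 — 4 statements merged into one kernel-verified Lean document; each statement's English description precedes it below -/
import Mathlib

section
/- Let k ≥ 1 and let z1, z2, z3 ∈ ℂ be pairwise distinct. If P is a complex polynomial of degree ≤ 2k−1 such that I_{z1,z2}(P·Q) = 0 and I_{z1,z3}(P·Q) = 0 for every complex polynomial Q of degree ≤ k−1, then P = 0. (Nondegeneracy of the bilinear form q_Z.) -/
/-!
Let `W` be the `k`-th antiderivative of `P` that vanishes to order `k` at `z1`. Integrating by
parts `k` times, orthogonality of `P` to `ℂ_{k-1}` on the segment `[z1, z]` forces `W` to vanish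
to order `k` at `z` as well. Hence `(X - z1)^k (X - z2)^k (X - z3)^k` divides `W`, whose degree
is at most `3k - 1`, so `W = 0` and `P = W^{(k)} = 0`.
-/

open MeasureTheory

/-- Complex line integral `I_{z1,z2}(P) = ∫₀¹ P(z1 + t(z2 - z1)) (z2 - z1) dt`
of a function `P : ℂ → ℂ` over the oriented segment from `z1` to `z2`. -/
noncomputable def lineI (z1 z2 : ℂ) (P : ℂ → ℂ) : ℂ :=
  ∫ t in (0:ℝ)..1, P (z1 + (t : ℂ) * (z2 - z1)) * (z2 - z1)

open Polynomial

namespace Polynomial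

section CharZeroField

variable {K : Type*} [Field K] [CharZero K]

theorem exists_derivative_eq (p : K[X]) : ∃ F : K[X], derivative F = p := by
  induction p using Polynomial.induction_on' with
  | add p q hp hq =>
    obtain ⟨F, rfl⟩ := hp
    obtain ⟨G, rfl⟩ := hq
    exact ⟨F + G, derivative_add⟩
  | monomial n c =>
    refine ⟨monomial (n + 1) (c / (n + 1)), ?_⟩
    rw [derivative_monomial, Nat.add_sub_cancel, Nat.cast_add_one,
      div_mul_cancel₀ c (Nat.cast_add_one_ne_zero n)]

theorem exists_iterate_derivative_eq_and_eval_eq_zero (a : K) (p : K[X]) (k : ℕ) :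
    ∃ W : K[X], derivative^[k] W = p ∧ ∀ m < k, (derivative^[m] W).eval a = 0 := by
  induction k generalizing p with
  | zero => exact ⟨p, rfl, by simp⟩
  | succ k ih =>
    obtain ⟨F, hF⟩ := exists_derivative_eq p
    obtain ⟨W, hW, hWa⟩ := ih (F - C (F.eval a))
    refine ⟨W, ?_, fun m hm => ?_⟩
    · rw [Function.iterate_succ_apply', hW, derivative_sub, derivative_C, sub_zero, hF]
    · rcases Nat.lt_succ_iff_lt_or_eq.mp hm with hm | rfl
      · exact hWa m hm
      · simp [hW]

end CharZeroField

theorem natDegree_iterate_derivative_eq {R : Type*} [Semiring R] [IsAddTorsionFree R]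
    (p : R[X]) (k : ℕ) : (derivative^[k] p).natDegree = p.natDegree - k := by
  induction k with
  | zero => rfl
  | succ k ih =>
    rw [Function.iterate_succ_apply', natDegree_derivative, ih]
    omega

theorem X_sub_C_pow_dvd_of_iterate_derivative_eval_eq_zero {R : Type*} [CommRing R]
    [IsDomain R] [CharZero R] {p : R[X]} {a : R} {k : ℕ}
    (h : ∀ m < k, (derivative^[m] p).eval a = 0) : (X - C a) ^ k ∣ p := by
  rcases eq_or_ne p 0 with rfl | hp
  · exact dvd_zero _
  cases k with
  | zero => exact one_dvd p
  | succ n =>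
    exact (le_rootMultiplicity_iff hp).mp
      (lt_rootMultiplicity_of_isRoot_iterate_derivative hp fun m hm => h m (by omega))

theorem three_mul_le_natDegree_of_X_sub_C_pow_dvd {K : Type*} [Field K] {p : K[X]} (hp : p ≠ 0)
    {a b c : K} (hab : a ≠ b) (hbc : b ≠ c) (hac : a ≠ c) {k : ℕ}
    (ha : (X - C a) ^ k ∣ p) (hb : (X - C b) ^ k ∣ p) (hc : (X - C c) ^ k ∣ p) :
    3 * k ≤ p.natDegree := by
  have coprime {x y : K} (hxy : x ≠ y) : IsCoprime ((X - C x) ^ k) ((X - C y) ^ k) :=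
    (isCoprime_X_sub_C_of_isUnit_sub (sub_ne_zero.mpr hxy).isUnit).pow
  have habc := ((coprime hac).mul_left (coprime hbc)).mul_dvd ((coprime hab).mul_dvd ha hb) hc
  have hdeg := natDegree_le_of_dvd habc hp
  rw [((monic_X_sub_C a).pow k).mul ((monic_X_sub_C b).pow k) |>.natDegree_mul
    ((monic_X_sub_C c).pow k), Monic.natDegree_mul ((monic_X_sub_C a).pow k)
    ((monic_X_sub_C b).pow k)] at hdeg
  simp only [natDegree_pow, natDegree_X_sub_C, mul_one] at hdeg
  omega

end Polynomial

theorem lineI_add {f g : ℂ → ℂ} (hf : Continuous f) (hg : Continuous g) (z1 z2 : ℂ) :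
    lineI z1 z2 (fun z => f z + g z) = lineI z1 z2 f + lineI z1 z2 g := by
  unfold lineI
  simp_rw [add_mul]
  exact intervalIntegral.integral_add (Continuous.intervalIntegrable (by fun_prop) _ _)
    (Continuous.intervalIntegrable (by fun_prop) _ _)

theorem lineI_eq_sub_of_hasDerivAt {f f' : ℂ → ℂ} (hf : ∀ z, HasDerivAt f (f' z) z)
    (hf' : Continuous f') (z1 z2 : ℂ) : lineI z1 z2 f' = f z2 - f z1 := by
  have hγ (t : ℝ) : HasDerivAt (fun s : ℝ => z1 + (s : ℂ) * (z2 - z1)) (z2 - z1) t := by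
    simpa using ((hasDerivAt_id (t : ℂ)).mul_const (z2 - z1)).const_add z1 |>.comp_ofReal
  unfold lineI
  rw [intervalIntegral.integral_eq_sub_of_hasDerivAt
    (fun t _ => (hf _).comp t (hγ t)) (Continuous.intervalIntegrable (by fun_prop) _ _)]
  simp

theorem lineI_derivative_eval (F : ℂ[X]) (z1 z2 : ℂ) :
    lineI z1 z2 (fun z => (derivative F).eval z) = F.eval z2 - F.eval z1 :=
  lineI_eq_sub_of_hasDerivAt F.hasDerivAt (derivative F).continuous z1 z2

def OrthogonalOnSegment (z1 z2 : ℂ) (n : ℕ) (P : ℂ[X]) : Prop :=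
  ∀ Q : ℂ[X], Q.natDegree < n → lineI z1 z2 (fun z => P.eval z * Q.eval z) = 0

section OrthogonalOnSegment

variable {z1 z2 : ℂ}

-- Integrate by parts against an antiderivative of `Q`: the boundary terms vanish because `F`
-- vanishes at both ends.
theorem OrthogonalOnSegment.of_derivative {F : ℂ[X]} {m : ℕ}
    (h : OrthogonalOnSegment z1 z2 (m + 1) (derivative F)) (hF1 : F.eval z1 = 0) :
    F.eval z2 = 0 ∧ OrthogonalOnSegment z1 z2 m F := by
  have hF2 : F.eval z2 = 0 := by
    simpa [lineI_derivative_eval, hF1, sub_eq_zero] using h 1 (by simp)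
  refine ⟨hF2, fun Q hQ => ?_⟩
  obtain ⟨B, rfl⟩ := exists_derivative_eq Q
  have hB : B.natDegree < m + 1 := by
    rw [natDegree_derivative] at hQ
    omega
  have hparts := lineI_derivative_eval (F * B) z1 z2
  simp only [derivative_mul, eval_add, eval_mul, hF1, hF2, zero_mul, sub_self] at hparts
  rwa [lineI_add (by fun_prop) (by fun_prop), h B hB, zero_add] at hparts

theorem OrthogonalOnSegment.iterate_derivative_eval_eq_zero {W : ℂ[X]} {k : ℕ}
    (h : OrthogonalOnSegment z1 z2 k (derivative^[k] W))
    (hW : ∀ m < k, (derivative^[m] W).eval z1 = 0) :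
    ∀ m < k, (derivative^[m] W).eval z2 = 0 := by
  induction k with
  | zero => simp
  | succ k ih =>
    rw [Function.iterate_succ_apply'] at h
    obtain ⟨hk, h'⟩ := h.of_derivative (hW k k.lt_succ_self)
    intro m hm
    rcases Nat.lt_succ_iff_lt_or_eq.mp hm with hm | rfl
    · exact ih h' (fun m hm => hW m (by omega)) m hm
    · exact hk

end OrthogonalOnSegment

theorem qZ_nondegenerate (k : ℕ) (hk : 1 ≤ k) (z1 z2 z3 : ℂ)
    (h12 : z1 ≠ z2) (h23 : z2 ≠ z3) (h13 : z1 ≠ z3)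
    (P : Polynomial ℂ) (hP : P.natDegree ≤ 2 * k - 1)
    (hvan : ∀ Q : Polynomial ℂ, Q.natDegree ≤ k - 1 →
      lineI z1 z2 (fun z => P.eval z * Q.eval z) = 0 ∧
      lineI z1 z3 (fun z => P.eval z * Q.eval z) = 0) :
    P = 0 := by
  obtain ⟨W, hWP, hW1⟩ := exists_iterate_derivative_eq_and_eval_eq_zero z1 P k
  have hdvd {z : ℂ} (hz : OrthogonalOnSegment z1 z k P) : (X - C z) ^ k ∣ W :=
    X_sub_C_pow_dvd_of_iterate_derivative_eval_eq_zero
      ((hWP ▸ hz).iterate_derivative_eval_eq_zero hW1)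
  by_contra hP0
  have hW0 : W ≠ 0 := by
    rintro rfl
    exact hP0 (by simpa using hWP.symm)
  have h3k := three_mul_le_natDegree_of_X_sub_C_pow_dvd hW0 h12 h23 h13
    (X_sub_C_pow_dvd_of_iterate_derivative_eval_eq_zero hW1)
    (hdvd fun Q hQ => (hvan Q (by omega)).1) (hdvd fun Q hQ => (hvan Q (by omega)).2)
  have hdeg := natDegree_iterate_derivative_eq W k
  rw [hWP] at hdeg
  omega
end

section
/- Let k ≥ 1. For all c, z1, z2, z3 ∈ ℂ one has det M(z1+c, z2+c, z3+c) = det M(z1, z2, z3). -/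
/-- The `2k × 2k` matrix `M(z1, z2, z3)` of Mirebeau: for `1 ≤ i ≤ 2k` and `1 ≤ j ≤ k`
(here written with 0-based indices), `M_{i,j} = (z2^{i+j-1} - z1^{i+j-1})/(i+j-1)` and
`M_{i,j+k} = (z3^{i+j-1} - z1^{i+j-1})/(i+j-1)`. -/
noncomputable def Mmat (k : ℕ) (z1 z2 z3 : ℂ) : Matrix (Fin (2 * k)) (Fin (2 * k)) ℂ :=
  Matrix.of fun i j =>
    if (j : ℕ) < k then
      (z2 ^ ((i : ℕ) + (j : ℕ) + 1) - z1 ^ ((i : ℕ) + (j : ℕ) + 1)) /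
        (((i : ℕ) + (j : ℕ) + 1 : ℕ) : ℂ)
    else
      (z3 ^ ((i : ℕ) + ((j : ℕ) - k) + 1) - z1 ^ ((i : ℕ) + ((j : ℕ) - k) + 1)) /
        (((i : ℕ) + ((j : ℕ) - k) + 1 : ℕ) : ℂ)

noncomputable def lent (c : ℂ) (i a : ℕ) : ℂ := (i.choose a : ℂ) * c ^ (i - a)

noncomputable def rent (k : ℕ) (c : ℂ) (b j : ℕ) : ℂ :=
  if b < k then (if j < k then lent c j b else 0)
  else (if j < k then 0 else lent c (j - k) (b - k))

noncomputable def Lmat (k : ℕ) (c : ℂ) : Matrix (Fin (2 * k)) (Fin (2 * k)) ℂ :=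
  Matrix.of fun i a => lent c (i : ℕ) (a : ℕ)

noncomputable def Rmat (k : ℕ) (c : ℂ) : Matrix (Fin (2 * k)) (Fin (2 * k)) ℂ :=
  Matrix.of fun b j => rent k c (b : ℕ) (j : ℕ)

lemma binom_step (n : ℕ) (c z : ℂ) :
    ∑ m ∈ Finset.range (n+1), ((n.choose m : ℂ)) * (c^(n-m) * z^(m+1) / ((m+1 : ℕ) : ℂ))
    = ((z+c)^(n+1) - c^(n+1)) / ((n+1 : ℕ) : ℂ) := by
  rw [add_pow]
  rw [Finset.sum_range_succ' (fun m => z ^ m * c ^ (n + 1 - m) * ((n+1).choose m : ℂ))]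
  simp only [pow_zero, Nat.sub_zero, Nat.choose_zero_right, Nat.cast_one, one_mul, mul_one]
  rw [add_sub_cancel_right, Finset.sum_div]
  refine Finset.sum_congr rfl fun m hm => ?_
  have h : ((n+1).choose (m+1) : ℂ) * (m+1) = (n+1) * (n.choose m) := by
    exact_mod_cast (Nat.add_one_mul_choose_eq n m).symm
  have h1 : ((m:ℂ)+1) ≠ 0 := Nat.cast_add_one_ne_zero m
  have h2 : ((n:ℂ)+1) ≠ 0 := Nat.cast_add_one_ne_zero n
  have he : n + 1 - (m+1) = n - m := by omega
  rw [he]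
  push_cast
  field_simp
  linear_combination (-(z ^ (m + 1) * c ^ (n - m))) * h

lemma vander_sum (i j : ℕ) (G : ℕ → ℂ) :
    ∑ a ∈ Finset.range (i+1), ∑ b ∈ Finset.range (j+1),
      (i.choose a : ℂ) * (j.choose b : ℂ) * G (a+b)
    = ∑ m ∈ Finset.range (i+j+1), ((i+j).choose m : ℂ) * G m := by
  set N := i + j + 1 with hN
  set f : ℕ → ℕ → ℂ := fun a b => (i.choose a : ℂ) * (j.choose b : ℂ) * G (a+b) with hf
  have step1 : ∑ a ∈ Finset.range (i+1), ∑ b ∈ Finset.range (j+1), f a b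
      = ∑ a ∈ Finset.range N, ∑ b ∈ Finset.range (N - a), f a b := by
    rw [Finset.sum_subset (Finset.range_subset_range.2 (by omega : i + 1 ≤ N))]
    · refine Finset.sum_congr rfl fun a ha => ?_
      rcases le_or_gt a i with hai | hai
      · exact Finset.sum_subset (Finset.range_subset_range.2 (by omega)) (fun b _ hb => by
          simp only [f, Nat.choose_eq_zero_of_lt (by simpa using hb : j < b)]
          simp)
      · refine (Finset.sum_eq_zero fun b _ => ?_).trans
          (Finset.sum_eq_zero fun b _ => ?_).symm <;>
        · simp only [f, Nat.choose_eq_zero_of_lt hai]; simp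
    · intro a _ ha
      refine Finset.sum_eq_zero fun b _ => ?_
      simp only [f, Nat.choose_eq_zero_of_lt (by simpa using ha : i < a)]
      simp
  rw [step1, ← Finset.sum_range_diag_flip N f]
  refine Finset.sum_congr rfl fun m hm => ?_
  have hv : (((i+j).choose m : ℕ) : ℂ)
      = ∑ kk ∈ Finset.range (m+1), (i.choose kk : ℂ) * (j.choose (m - kk) : ℂ) := by
    rw [Nat.add_choose_eq, Finset.Nat.sum_antidiagonal_eq_sum_range_succ_mk]
    push_cast
    rfl
  rw [hv, Finset.sum_mul]
  refine Finset.sum_congr rfl fun kk hkk => ?_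
  have : kk + (m - kk) = m := by
    have := Finset.mem_range.1 hkk; omega
  simp only [f, this]

lemma key_sum (i j : ℕ) (c z : ℂ) :
    ∑ a ∈ Finset.range (i+1), ∑ b ∈ Finset.range (j+1),
      lent c i a * lent c j b * (z^(a+b+1) / ((a+b+1 : ℕ) : ℂ))
    = ((z+c)^(i+j+1) - c^(i+j+1)) / ((i+j+1 : ℕ) : ℂ) := by
  have h1 : ∑ a ∈ Finset.range (i+1), ∑ b ∈ Finset.range (j+1),
      lent c i a * lent c j b * (z^(a+b+1) / ((a+b+1 : ℕ) : ℂ))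
      = ∑ a ∈ Finset.range (i+1), ∑ b ∈ Finset.range (j+1),
        (i.choose a : ℂ) * (j.choose b : ℂ) *
          (c^(i+j-(a+b)) * z^((a+b)+1) / (((a+b)+1 : ℕ) : ℂ)) := by
    refine Finset.sum_congr rfl fun a ha => Finset.sum_congr rfl fun b hb => ?_
    have hai : a ≤ i := by simpa using Nat.lt_succ_iff.1 (Finset.mem_range.1 ha)
    have hbj : b ≤ j := by simpa using Nat.lt_succ_iff.1 (Finset.mem_range.1 hb)
    have he : (i - a) + (j - b) = i + j - (a+b) := by omega
    simp only [lent]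
    rw [← he, pow_add]
    ring
  rw [h1, vander_sum i j (fun m => c^(i+j-m) * z^(m+1) / ((m+1 : ℕ) : ℂ))]
  exact binom_step (i+j) c z

lemma innerSumAux (n i j : ℕ) (hi : i < n) (c z w : ℂ) :
    ∑ b ∈ Finset.range (j+1),
      (∑ a ∈ Finset.range n, lent c i a * ((z^(a+b+1) - w^(a+b+1)) / ((a+b+1 : ℕ) : ℂ)))
        * lent c j b
    = ((z+c)^(i+j+1) - (w+c)^(i+j+1)) / ((i+j+1 : ℕ) : ℂ) := by
  have hshrink : ∀ b : ℕ,
      ∑ a ∈ Finset.range n, lent c i a * ((z^(a+b+1) - w^(a+b+1)) / ((a+b+1 : ℕ) : ℂ))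
      = ∑ a ∈ Finset.range (i+1), lent c i a * ((z^(a+b+1) - w^(a+b+1)) / ((a+b+1 : ℕ) : ℂ)) := by
    intro b
    refine (Finset.sum_subset (Finset.range_subset_range.2 (by omega)) fun a _ ha => ?_).symm
    simp only [lent, Nat.choose_eq_zero_of_lt (by simpa using ha : i < a)]
    simp
  calc ∑ b ∈ Finset.range (j+1),
      (∑ a ∈ Finset.range n, lent c i a * ((z^(a+b+1) - w^(a+b+1)) / ((a+b+1 : ℕ) : ℂ)))
        * lent c j b
      = ∑ b ∈ Finset.range (j+1), ∑ a ∈ Finset.range (i+1),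
          (lent c i a * lent c j b * (z^(a+b+1) / ((a+b+1 : ℕ) : ℂ))
           - lent c i a * lent c j b * (w^(a+b+1) / ((a+b+1 : ℕ) : ℂ))) := by
        refine Finset.sum_congr rfl fun b _ => ?_
        rw [hshrink b, Finset.sum_mul]
        refine Finset.sum_congr rfl fun a _ => ?_
        ring
    _ = ((z+c)^(i+j+1) - c^(i+j+1)) / ((i+j+1 : ℕ) : ℂ)
        - ((w+c)^(i+j+1) - c^(i+j+1)) / ((i+j+1 : ℕ) : ℂ) := by
        rw [Finset.sum_comm]
        rw [← key_sum i j c z, ← key_sum i j c w, ← Finset.sum_sub_distrib]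
        refine Finset.sum_congr rfl fun a _ => ?_
        rw [← Finset.sum_sub_distrib]
    _ = ((z+c)^(i+j+1) - (w+c)^(i+j+1)) / ((i+j+1 : ℕ) : ℂ) := by ring

lemma entry_eq (k : ℕ) (c z1 z2 z3 : ℂ) (m n : ℕ) (hm : m < 2*k) (hn : n < 2*k) :
    ∑ b ∈ Finset.range (2*k), (∑ a ∈ Finset.range (2*k), lent c m a *
          (if b < k then
            (z2 ^ (a + b + 1) - z1 ^ (a + b + 1)) / ((a + b + 1 : ℕ) : ℂ)
           else
            (z3 ^ (a + (b-k) + 1) - z1 ^ (a + (b-k) + 1)) / ((a + (b-k) + 1 : ℕ) : ℂ)))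
        * rent k c b n
    = if n < k then
        ((z2+c) ^ (m + n + 1) - (z1+c) ^ (m + n + 1)) / ((m + n + 1 : ℕ) : ℂ)
      else
        ((z3+c) ^ (m + (n-k) + 1) - (z1+c) ^ (m + (n-k) + 1)) / ((m + (n-k) + 1 : ℕ) : ℂ) := by
  rcases lt_or_ge n k with hnk | hnk
  · rw [if_pos hnk, ← innerSumAux (2*k) m n hm c z2 z1]
    rw [← Finset.sum_subset (Finset.range_subset_range.2 (by omega : n+1 ≤ 2*k))]
    · refine Finset.sum_congr rfl fun b hb => ?_
      have hbk : b < k := by have := Finset.mem_range.1 hb; omega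
      simp only [if_pos hbk, rent, if_pos hnk]
    · intro b _ hb
      have hbn : n < b := by simpa using hb
      rcases lt_or_ge b k with h2 | h2
      · simp only [rent, if_pos h2, if_pos hnk, lent, Nat.choose_eq_zero_of_lt hbn]
        simp
      · simp only [rent, if_neg (by omega : ¬ b < k), if_pos hnk, mul_zero]
  · rw [if_neg (not_lt.2 hnk), ← innerSumAux (2*k) m (n-k) hm c z3 z1]
    have h2k : 2*k = k + k := two_mul k
    rw [h2k, Finset.sum_range_add]
    have hz : ∀ b ∈ Finset.range k, (∑ a ∈ Finset.range (k+k), lent c m a *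
          (if b < k then
            (z2 ^ (a + b + 1) - z1 ^ (a + b + 1)) / ((a + b + 1 : ℕ) : ℂ)
           else
            (z3 ^ (a + (b-k) + 1) - z1 ^ (a + (b-k) + 1)) / ((a + (b-k) + 1 : ℕ) : ℂ)))
        * rent k c b n = 0 := by
      intro b hb
      have hbk : b < k := Finset.mem_range.1 hb
      simp only [rent, if_pos hbk, if_neg (not_lt.2 hnk), mul_zero]
    rw [Finset.sum_eq_zero hz, zero_add]
    rw [← Finset.sum_subset (Finset.range_subset_range.2 (by omega : (n-k)+1 ≤ k))]
    · refine Finset.sum_congr rfl fun b hb => ?_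
      have hbk : ¬ (k + b < k) := by omega
      have hkb : k + b - k = b := by omega
      simp only [if_neg hbk, hkb, rent, if_neg (not_lt.2 hnk), lent]
    · intro b _ hb
      have hbn : n - k < b := by simpa using hb
      have hbk : ¬ (k + b < k) := by omega
      have hkb : k + b - k = b := by omega
      simp only [rent, if_neg hbk, if_neg (not_lt.2 hnk), hkb, lent,
        Nat.choose_eq_zero_of_lt hbn]
      simp

lemma mul_eq (k : ℕ) (c z1 z2 z3 : ℂ) :
    Lmat k c * Mmat k z1 z2 z3 * Rmat k c = Mmat k (z1+c) (z2+c) (z3+c) := by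
  ext i j
  rw [Matrix.mul_apply]
  have hLM : ∀ b : Fin (2*k), (Lmat k c * Mmat k z1 z2 z3) i b
      = ∑ a ∈ Finset.range (2*k), lent c (i:ℕ) a *
          (if (b:ℕ) < k then
            (z2 ^ (a + (b:ℕ) + 1) - z1 ^ (a + (b:ℕ) + 1)) / ((a + (b:ℕ) + 1 : ℕ) : ℂ)
           else
            (z3 ^ (a + ((b:ℕ)-k) + 1) - z1 ^ (a + ((b:ℕ)-k) + 1)) / ((a + ((b:ℕ)-k) + 1 : ℕ) : ℂ)) := by
    intro b
    rw [Matrix.mul_apply, ← Fin.sum_univ_eq_sum_range (fun a => lent c (i:ℕ) a *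
          (if (b:ℕ) < k then
            (z2 ^ (a + (b:ℕ) + 1) - z1 ^ (a + (b:ℕ) + 1)) / ((a + (b:ℕ) + 1 : ℕ) : ℂ)
           else
            (z3 ^ (a + ((b:ℕ)-k) + 1) - z1 ^ (a + ((b:ℕ)-k) + 1)) / ((a + ((b:ℕ)-k) + 1 : ℕ) : ℂ))) (2*k)]
    rfl
  simp only [hLM]
  rw [show ∑ x : Fin (2*k), (∑ a ∈ Finset.range (2*k), lent c (i:ℕ) a *
          (if (x:ℕ) < k then
            (z2 ^ (a + (x:ℕ) + 1) - z1 ^ (a + (x:ℕ) + 1)) / ((a + (x:ℕ) + 1 : ℕ) : ℂ)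
           else
            (z3 ^ (a + ((x:ℕ)-k) + 1) - z1 ^ (a + ((x:ℕ)-k) + 1)) / ((a + ((x:ℕ)-k) + 1 : ℕ) : ℂ)))
        * Rmat k c x j
      = ∑ b ∈ Finset.range (2*k), (∑ a ∈ Finset.range (2*k), lent c (i:ℕ) a *
          (if b < k then
            (z2 ^ (a + b + 1) - z1 ^ (a + b + 1)) / ((a + b + 1 : ℕ) : ℂ)
           else
            (z3 ^ (a + (b-k) + 1) - z1 ^ (a + (b-k) + 1)) / ((a + (b-k) + 1 : ℕ) : ℂ)))
        * rent k c b (j:ℕ)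
    from Fin.sum_univ_eq_sum_range (fun b => (∑ a ∈ Finset.range (2*k), lent c (i:ℕ) a *
          (if b < k then
            (z2 ^ (a + b + 1) - z1 ^ (a + b + 1)) / ((a + b + 1 : ℕ) : ℂ)
           else
            (z3 ^ (a + (b-k) + 1) - z1 ^ (a + (b-k) + 1)) / ((a + (b-k) + 1 : ℕ) : ℂ)))
        * rent k c b (j:ℕ)) (2*k)]
  rw [entry_eq k c z1 z2 z3 (i:ℕ) (j:ℕ) i.isLt j.isLt]
  rfl

lemma det_Lmat (k : ℕ) (c : ℂ) : (Lmat k c).det = 1 := by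
  rw [Matrix.det_of_lowerTriangular]
  · refine Finset.prod_eq_one fun i _ => ?_
    simp [Lmat, lent]
  · intro i j hij
    have : (i:ℕ) < (j:ℕ) := hij
    simp [Lmat, lent, Nat.choose_eq_zero_of_lt this]

lemma det_Rmat (k : ℕ) (c : ℂ) : (Rmat k c).det = 1 := by
  rw [Matrix.det_of_upperTriangular]
  · refine Finset.prod_eq_one fun j _ => ?_
    by_cases h : (j:ℕ) < k <;> simp [Rmat, rent, lent, h]
  · intro b j hjb
    have hjb' : (j:ℕ) < (b:ℕ) := hjb
    by_cases h1 : (b:ℕ) < k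
    · have h2 : (j:ℕ) < k := by omega
      simp [Rmat, rent, h1, h2, lent, Nat.choose_eq_zero_of_lt hjb']
    · by_cases h2 : (j:ℕ) < k
      · simp [Rmat, rent, h1, h2]
      · simp [Rmat, rent, h1, h2, lent,
          Nat.choose_eq_zero_of_lt (show (j:ℕ)-k < (b:ℕ)-k by omega)]

theorem det_Mmat_translation_invariant (k : ℕ) (hk : 1 ≤ k) (c z1 z2 z3 : ℂ) :
    Matrix.det (Mmat k (z1 + c) (z2 + c) (z3 + c)) = Matrix.det (Mmat k z1 z2 z3) := by
  rw [← mul_eq k c z1 z2 z3, Matrix.det_mul, Matrix.det_mul, det_Lmat, det_Rmat,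
    one_mul, mul_one]
end

section
/- Let k ≥ 1 and c ∈ ℂ. Define the 2k × 2k matrix P(c) by P(c)_{i,j} = binom(j−1, i−1)·c^{j−i} if i ≤ j and 0 otherwise (indices 1 ≤ i, j ≤ 2k), and define the 2k × 2k matrix P*(c) as the block-diagonal matrix with two identical k × k diagonal blocks whose entries are binom(j−1, i−1)·c^{j−i} for i ≤ j and 0 otherwise (1 ≤ i, j ≤ k). Then for all z1, z2, z3 ∈ ℂ: M(z1+c, z2+c, z3+c) = P(c)ᵀ · M(z1,z2,z3) · P*(c). Moreover P(c) and P*(c) are upper triangular with all diagonal entries equal to 1, so det P(c) = det P*(c) = 1. -/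
/-- The change-of-basis matrix `P(c)` on `ℂ_{2k-1}`: with 0-based indices,
`P(c)_{i,j} = binom(j, i) c^{j-i}` for `i ≤ j` and `0` otherwise. -/
noncomputable def Pmat (k : ℕ) (c : ℂ) : Matrix (Fin (2 * k)) (Fin (2 * k)) ℂ :=
  Matrix.of fun i j =>
    if (i : ℕ) ≤ (j : ℕ) then ((Nat.choose (j : ℕ) (i : ℕ) : ℕ) : ℂ) * c ^ ((j : ℕ) - (i : ℕ))
    else 0

/-- Entry of the `k × k` diagonal block used in `P*(c)`. -/
noncomputable def Pblock (c : ℂ) (a b : ℕ) : ℂ :=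
  if a ≤ b then ((Nat.choose b a : ℕ) : ℂ) * c ^ (b - a) else 0

/-- The block-diagonal change-of-basis matrix `P*(c)` on `ℂ_{k-1} × ℂ_{k-1}`, with two
identical `k × k` diagonal blocks. -/
noncomputable def Pstar (k : ℕ) (c : ℂ) : Matrix (Fin (2 * k)) (Fin (2 * k)) ℂ :=
  Matrix.of fun i j =>
    if (i : ℕ) < k ∧ (j : ℕ) < k then Pblock c (i : ℕ) (j : ℕ)
    else if k ≤ (i : ℕ) ∧ k ≤ (j : ℕ) then Pblock c ((i : ℕ) - k) ((j : ℕ) - k)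
    else 0

open Finset Matrix

section SegmentMoment

variable {𝕜 : Type*} [RCLike 𝕜]

/-- `∫_y^x z^p dz`. -/
noncomputable def segmentMoment (y x : 𝕜) (p : ℕ) : 𝕜 :=
  (x ^ (p + 1) - y ^ (p + 1)) / ((p + 1 : ℕ) : 𝕜)

theorem hasDerivAt_pow_succ_div (p : ℕ) (x : 𝕜) :
    HasDerivAt (fun x => x ^ (p + 1) / ((p + 1 : ℕ) : 𝕜)) (x ^ p) x := by
  have hp : ((p + 1 : ℕ) : 𝕜) ≠ 0 := Nat.cast_ne_zero.mpr p.succ_ne_zero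
  have h := (hasDerivAt_pow (p + 1) x).div_const ((p + 1 : ℕ) : 𝕜)
  rwa [Nat.add_sub_cancel, mul_div_cancel_left₀ _ hp] at h

theorem sub_eq_sub_of_hasDerivAt {f g f' : 𝕜 → 𝕜} (hf : ∀ x, HasDerivAt f (f' x) x)
    (hg : ∀ x, HasDerivAt g (f' x) x) (x y : 𝕜) : f x - f y = g x - g y := by
  have hfg : ∀ x, HasDerivAt (f - g) 0 x := fun x => by simpa using (hf x).sub (hg x)
  have := is_const_of_deriv_eq_zero (fun x => (hfg x).differentiableAt) (fun x => (hfg x).deriv)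
    x y
  simp only [Pi.sub_apply] at this
  linear_combination this

theorem hasDerivAt_sum_choose_mul_pow_succ_div (c : 𝕜) (n m : ℕ) (x : 𝕜) :
    HasDerivAt (fun x => ∑ a ∈ range (n + 1), ∑ b ∈ range (m + 1),
        (n.choose a * c ^ (n - a)) * (x ^ (a + b + 1) / ((a + b + 1 : ℕ) : 𝕜)) *
          (m.choose b * c ^ (m - b)))
      ((x + c) ^ (n + m)) x := by
  have hsum : (x + c) ^ (n + m) = ∑ a ∈ range (n + 1), ∑ b ∈ range (m + 1),
      (n.choose a * c ^ (n - a)) * x ^ (a + b) * (m.choose b * c ^ (m - b)) := by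
    rw [pow_add, add_pow, add_pow, sum_mul_sum]
    refine sum_congr rfl fun a _ => sum_congr rfl fun b _ => ?_
    ring
  rw [hsum]
  refine HasDerivAt.fun_sum fun a _ => HasDerivAt.fun_sum fun b _ => ?_
  exact ((hasDerivAt_pow_succ_div (a + b) x).const_mul _).mul_const _

theorem segmentMoment_add_const (y x c : 𝕜) (n m : ℕ) :
    segmentMoment (y + c) (x + c) (n + m) = ∑ a ∈ range (n + 1), ∑ b ∈ range (m + 1),
      (n.choose a * c ^ (n - a)) * segmentMoment y x (a + b) * (m.choose b * c ^ (m - b)) := by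
  have key := sub_eq_sub_of_hasDerivAt
    (fun x => (hasDerivAt_pow_succ_div (n + m) (x + c)).comp_add_const x c)
    (hasDerivAt_sum_choose_mul_pow_succ_div c n m) x y
  simp only [segmentMoment, sub_div, key, ← sum_sub_distrib, mul_sub, sub_mul]

end SegmentMoment

noncomputable def momentMatrix (m n : ℕ) (y x : ℂ) : Matrix (Fin m) (Fin n) ℂ :=
  of fun i j => segmentMoment y x (i + j)

noncomputable def pascalMatrix (n : ℕ) (c : ℂ) : Matrix (Fin n) (Fin n) ℂ :=
  of fun i j => Pblock c i j

theorem sum_Pblock_mul (c : ℂ) (f : ℕ → ℂ) {N : ℕ} (n : Fin N) :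
    ∑ a : Fin N, Pblock c a n * f a =
      ∑ a ∈ range (n + 1), (n : ℕ).choose a * c ^ ((n : ℕ) - a) * f a := by
  rw [Fin.sum_univ_eq_sum_range (fun a => Pblock c a n * f a),
    ← sum_subset (range_subset_range.mpr n.isLt) fun a _ ha => ?_]
  · refine sum_congr rfl fun a ha => ?_
    rw [Pblock, if_pos (Nat.lt_succ_iff.mp (mem_range.mp ha))]
  · rw [Pblock, if_neg (by simpa using ha), zero_mul]

theorem momentMatrix_add_const (m n : ℕ) (y x c : ℂ) :
    momentMatrix m n (y + c) (x + c) =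
      (pascalMatrix m c)ᵀ * momentMatrix m n y x * pascalMatrix n c := by
  ext i j
  simp only [mul_apply, transpose_apply, pascalMatrix, momentMatrix, of_apply]
  simp_rw [mul_comm _ (Pblock c _ j)]
  rw [sum_Pblock_mul c (fun b => ∑ a : Fin m, Pblock c a i * segmentMoment y x (a + b)) j,
    segmentMoment_add_const, sum_comm]
  refine sum_congr rfl fun b _ => ?_
  rw [sum_Pblock_mul c (fun a => segmentMoment y x (a + b)) i, mul_sum]
  refine sum_congr rfl fun a _ => ?_
  ring

def finTwoMulEquiv (k : ℕ) : Fin k ⊕ Fin k ≃ Fin (2 * k) :=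
  finSumFinEquiv.trans (finCongr (two_mul k).symm)

theorem Mmat_submatrix_finTwoMulEquiv (k : ℕ) (z1 z2 z3 : ℂ) :
    (Mmat k z1 z2 z3).submatrix id (finTwoMulEquiv k) =
      fromCols (momentMatrix (2 * k) k z1 z2) (momentMatrix (2 * k) k z1 z3) := by
  ext i (j | j) <;> simp [Mmat, momentMatrix, segmentMoment, finTwoMulEquiv]

theorem Pstar_submatrix_finTwoMulEquiv (k : ℕ) (c : ℂ) :
    (Pstar k c).submatrix (finTwoMulEquiv k) (finTwoMulEquiv k) =
      fromBlocks (pascalMatrix k c) 0 0 (pascalMatrix k c) := by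
  ext (i | i) (j | j) <;> simp [Pstar, pascalMatrix, finTwoMulEquiv]

theorem Pmat_eq_pascalMatrix (k : ℕ) (c : ℂ) : Pmat k c = pascalMatrix (2 * k) c := rfl

theorem Mmat_add_const (k : ℕ) (c z1 z2 z3 : ℂ) :
    Mmat k (z1 + c) (z2 + c) (z3 + c) = (Pmat k c)ᵀ * Mmat k z1 z2 z3 * Pstar k c := by
  apply (reindex (Equiv.refl _) (finTwoMulEquiv k).symm).injective
  simp only [reindex_apply, Equiv.refl_symm, Equiv.coe_refl, Equiv.symm_symm]
  rw [← submatrix_mul_equiv _ _ _ (finTwoMulEquiv k),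
    ← submatrix_mul_equiv _ _ _ (Equiv.refl _)]
  simp only [Equiv.coe_refl, submatrix_id_id, Mmat_submatrix_finTwoMulEquiv,
    Pstar_submatrix_finTwoMulEquiv, mul_fromCols, fromCols_mul_fromBlocks, Matrix.mul_zero,
    add_zero, zero_add, momentMatrix_add_const, Pmat_eq_pascalMatrix]

theorem Pblock_of_lt (c : ℂ) {a b : ℕ} (h : b < a) : Pblock c a b = 0 :=
  if_neg h.not_ge

theorem Pblock_self (c : ℂ) (a : ℕ) : Pblock c a a = 1 := by
  simp [Pblock]

theorem Pmat_isUpperTriangular (k : ℕ) (c : ℂ) : (Pmat k c).IsUpperTriangular :=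
  fun _ _ h => Pblock_of_lt c h

theorem Pmat_apply_self (k : ℕ) (c : ℂ) (i : Fin (2 * k)) : Pmat k c i i = 1 :=
  Pblock_self c i

theorem Pstar_isUpperTriangular (k : ℕ) (c : ℂ) : (Pstar k c).IsUpperTriangular := by
  intro i j h
  simp only [Pstar, of_apply]
  split_ifs <;>
    first | rfl | exact Pblock_of_lt c (by simp only [id, Fin.lt_def] at h; omega)

theorem Pstar_apply_self (k : ℕ) (c : ℂ) (i : Fin (2 * k)) : Pstar k c i i = 1 := by
  simp only [Pstar, of_apply, Pblock_self]
  split_ifs <;> first | rfl | omega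

theorem det_eq_one_of_isUpperTriangular {n R : Type*} [Fintype n] [LinearOrder n] [CommRing R]
    {M : Matrix n n R} (h : M.IsUpperTriangular) (hdiag : ∀ i, M i i = 1) : M.det = 1 := by
  rw [det_of_isUpperTriangular h]
  exact prod_eq_one fun i _ => hdiag i

theorem Mmat_change_of_basis_general (k : ℕ) (c : ℂ) (z1 z2 z3 : ℂ) :
    Mmat k (z1 + c) (z2 + c) (z3 + c) =
      (Pmat k c).transpose * Mmat k z1 z2 z3 * Pstar k c
    ∧ (∀ i j : Fin (2 * k), (j : ℕ) < (i : ℕ) → Pmat k c i j = 0)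
    ∧ (∀ i : Fin (2 * k), Pmat k c i i = 1)
    ∧ (∀ i j : Fin (2 * k), (j : ℕ) < (i : ℕ) → Pstar k c i j = 0)
    ∧ (∀ i : Fin (2 * k), Pstar k c i i = 1)
    ∧ Matrix.det (Pmat k c) = 1 ∧ Matrix.det (Pstar k c) = 1 :=
  ⟨Mmat_add_const k c z1 z2 z3,
    fun _ _ h => Pmat_isUpperTriangular k c h, Pmat_apply_self k c,
    fun _ _ h => Pstar_isUpperTriangular k c h, Pstar_apply_self k c,
    det_eq_one_of_isUpperTriangular (Pmat_isUpperTriangular k c) (Pmat_apply_self k c),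
    det_eq_one_of_isUpperTriangular (Pstar_isUpperTriangular k c) (Pstar_apply_self k c)⟩

theorem Mmat_change_of_basis (k : ℕ) (hk : 1 ≤ k) (c : ℂ) (z1 z2 z3 : ℂ) :
    Mmat k (z1 + c) (z2 + c) (z3 + c) =
      (Pmat k c).transpose * Mmat k z1 z2 z3 * Pstar k c
    ∧ (∀ i j : Fin (2 * k), (j : ℕ) < (i : ℕ) → Pmat k c i j = 0)
    ∧ (∀ i : Fin (2 * k), Pmat k c i i = 1)
    ∧ (∀ i j : Fin (2 * k), (j : ℕ) < (i : ℕ) → Pstar k c i j = 0)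
    ∧ (∀ i : Fin (2 * k), Pstar k c i i = 1)
    ∧ Matrix.det (Pmat k c) = 1 ∧ Matrix.det (Pstar k c) = 1 :=
  Mmat_change_of_basis_general k c z1 z2 z3
end

section
/- Let k ≥ 1 and fix z1, z3 ∈ ℂ. The one-variable complex polynomial X ↦ det M(z1, X, z3) is divisible by (X − z1)^{k²}, and the one-variable complex polynomial X ↦ det M(z1, z2, X) (for fixed z1, z2) is divisible by (X − z1)^{k²}. -/
open Polynomial Finset

lemma exists_mu (l : ℕ) :
    ∃ μ : ℕ → ℂ, μ l = 1 ∧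
      ∀ r, r < l → (∑ j ∈ Finset.range (l+1), μ j * (((r + j + 1 : ℕ) : ℂ))⁻¹) = 0 := by
  classical
  set w : ℕ → ℂ := fun j => -((j : ℂ) + 1) with hw
  have hwinj : ∀ j j' : ℕ, w j = w j' → j = j' := by
    intro j j' h
    have h2 : ((j : ℂ)) = (j' : ℂ) := by
      simp only [hw] at h
      linear_combination -h
    exact_mod_cast h2
  set Q : Polynomial ℂ := ∏ r ∈ Finset.range l, (X - C (r : ℂ)) with hQ
  set d : ℕ → ℂ := fun j => ∏ j' ∈ (Finset.range (l+1)).erase j, (w j - w j') with hd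
  have hdne : ∀ j, d j ≠ 0 := by
    intro j
    refine Finset.prod_ne_zero_iff.2 ?_
    intro j' hj'
    have hne : j' ≠ j := (Finset.mem_erase.1 hj').1
    intro h
    exact hne (hwinj j j' (sub_eq_zero.1 h)).symm
  set ν : ℕ → ℂ := fun j => Q.eval (w j) * (d j)⁻¹ with hν
  set P : Polynomial ℂ :=
    (∑ j ∈ Finset.range (l+1), C (ν j) * ∏ j' ∈ (Finset.range (l+1)).erase j, (X - C (w j'))) - Q
    with hP
  have hdegprod : ∀ j ∈ Finset.range (l+1),
      (∏ j' ∈ (Finset.range (l+1)).erase j, (X - C (w j'))).natDegree ≤ l := by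
    intro j hj
    refine le_trans (Polynomial.natDegree_prod_le _ _) ?_
    refine le_trans (Finset.sum_le_card_nsmul _ _ 1 ?_) ?_
    · intro x _; exact Polynomial.natDegree_X_sub_C_le _
    · simp only [smul_eq_mul, mul_one, Finset.card_erase_of_mem hj, Finset.card_range]
      omega
  have hdegP : P.natDegree ≤ l := by
    refine le_trans (Polynomial.natDegree_sub_le _ _) (max_le ?_ ?_)
    · refine Polynomial.natDegree_sum_le_of_forall_le _ _ ?_
      intro j hj
      exact le_trans (Polynomial.natDegree_mul_le)
        (by simpa using hdegprod j hj)
    · refine le_trans (Polynomial.natDegree_prod_le _ _) ?_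
      refine le_trans (Finset.sum_le_card_nsmul _ _ 1 ?_) ?_
      · intro x _; exact Polynomial.natDegree_X_sub_C_le _
      · simp
  have hevalP : ∀ x : ℂ, P.eval x =
      (∑ j ∈ Finset.range (l+1), ν j * ∏ j' ∈ (Finset.range (l+1)).erase j, (x - w j'))
        - Q.eval x := by
    intro x
    simp [hP, Polynomial.eval_finset_sum, Polynomial.eval_prod]
  have hProots : ∀ j0 ∈ Finset.range (l+1), P.eval (w j0) = 0 := by
    intro j0 hj0
    rw [hevalP]
    have hsum : (∑ j ∈ Finset.range (l+1),
        ν j * ∏ j' ∈ (Finset.range (l+1)).erase j, (w j0 - w j')) = Q.eval (w j0) := by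
      rw [Finset.sum_eq_single j0]
      · show ν j0 * d j0 = Q.eval (w j0)
        rw [hν]
        simp only []
        rw [mul_assoc, inv_mul_cancel₀ (hdne j0), mul_one]
      · intro j hj hjne
        have hj0mem : j0 ∈ (Finset.range (l+1)).erase j :=
          Finset.mem_erase.2 ⟨fun h => hjne h.symm, hj0⟩
        rw [Finset.prod_eq_zero hj0mem (by ring), mul_zero]
      · intro h; exact absurd hj0 h
    rw [hsum, sub_self]
  have hPzero : P = 0 := by
    refine Polynomial.eq_zero_of_natDegree_lt_card_of_eval_eq_zero' P
      ((Finset.range (l+1)).image w) ?_ ?_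
    · intro x hx
      obtain ⟨j0, hj0, rfl⟩ := Finset.mem_image.1 hx
      exact hProots j0 hj0
    · rw [Finset.card_image_of_injOn (fun a _ b _ h => hwinj a b h)]
      simp only [Finset.card_range]
      omega
  have hνl : ν l ≠ 0 := by
    refine mul_ne_zero ?_ (inv_ne_zero (hdne l))
    rw [hQ, Polynomial.eval_prod]
    refine Finset.prod_ne_zero_iff.2 ?_
    intro m hm
    rw [Polynomial.eval_sub, Polynomial.eval_X, Polynomial.eval_C]
    intro h
    simp only [hw] at h
    have h2 : (((l + 1 + m : ℕ) : ℂ)) = 0 := by push_cast; linear_combination -h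
    have h3 : (l + 1 + m : ℕ) = 0 := by exact_mod_cast h2
    omega
  refine ⟨fun j => (ν l)⁻¹ * ν j, by simp [inv_mul_cancel₀ hνl], ?_⟩
  intro r hr
  have hQr : Q.eval (r : ℂ) = 0 := by
    rw [hQ, Polynomial.eval_prod]
    refine Finset.prod_eq_zero (Finset.mem_range.2 hr) ?_
    simp
  have h0 : (∑ j ∈ Finset.range (l+1),
      ν j * ∏ j' ∈ (Finset.range (l+1)).erase j, ((r : ℂ) - w j')) = 0 := by
    have h := hevalP (r : ℂ)
    rw [hPzero] at h
    simp only [Polynomial.eval_zero, hQr, sub_zero] at h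
    exact h.symm
  set T : ℂ := ∏ j' ∈ Finset.range (l+1), ((r : ℂ) - w j') with hT
  have hfval : ∀ j : ℕ, (r : ℂ) - w j = ((r + j + 1 : ℕ) : ℂ) := by
    intro j; simp only [hw]; push_cast; ring
  have hfne : ∀ j : ℕ, (r : ℂ) - w j ≠ 0 := by
    intro j; rw [hfval]; exact Nat.cast_ne_zero.2 (by omega)
  have hTne : T ≠ 0 := Finset.prod_ne_zero_iff.2 fun j _ => hfne j
  have hfac : ∀ j ∈ Finset.range (l+1),
      (∏ j' ∈ (Finset.range (l+1)).erase j, ((r : ℂ) - w j'))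
        = (((r + j + 1 : ℕ) : ℂ))⁻¹ * T := by
    intro j hj
    have hme := Finset.mul_prod_erase (Finset.range (l+1)) (fun j' => (r : ℂ) - w j') hj
    rw [← hfval j, eq_inv_mul_iff_mul_eq₀ (hfne j)]
    exact hme
  have h1 : (∑ j ∈ Finset.range (l+1), ν j * (((r + j + 1 : ℕ) : ℂ))⁻¹) * T = 0 := by
    rw [Finset.sum_mul, ← h0]
    refine Finset.sum_congr rfl ?_
    intro j hj
    rw [hfac j hj]; ring
  have h2 := (mul_eq_zero.1 h1).resolve_right hTne
  calc ∑ j ∈ Finset.range (l+1), ((ν l)⁻¹ * ν j) * (((r + j + 1 : ℕ) : ℂ))⁻¹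
      = (ν l)⁻¹ * ∑ j ∈ Finset.range (l+1), ν j * (((r + j + 1 : ℕ) : ℂ))⁻¹ := by
        rw [Finset.mul_sum]; exact Finset.sum_congr rfl fun j _ => by ring
    _ = 0 := by rw [h2, mul_zero]

lemma stage1 (z1 : ℂ) (i l : ℕ) :
    ∑ j ∈ Finset.range (l+1),
      C ((((i + j + 1 : ℕ) : ℂ))⁻¹ * ((Nat.choose l j : ℂ) * (-z1)^(l-j))) *
        ((C z1 + X)^(i+j+1) - C (z1^(i+j+1)))
    = ∑ r ∈ Finset.range (i+1),
      C ((Nat.choose i r : ℂ) * z1^(i-r) * (((r+l+1 : ℕ):ℂ))⁻¹) * X^(r+l+1) := by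
  set A : Polynomial ℂ := ∑ j ∈ Finset.range (l+1),
      C ((((i + j + 1 : ℕ) : ℂ))⁻¹ * ((Nat.choose l j : ℂ) * (-z1)^(l-j))) *
        ((C z1 + X)^(i+j+1) - C (z1^(i+j+1))) with hA
  set B : Polynomial ℂ := ∑ r ∈ Finset.range (i+1),
      C ((Nat.choose i r : ℂ) * z1^(i-r) * (((r+l+1 : ℕ):ℂ))⁻¹) * X^(r+l+1) with hB
  have hdA : derivative A = (C z1 + X)^i * X^l := by
    rw [hA, derivative_sum]
    have hterm : ∀ j ∈ Finset.range (l+1),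
        derivative (C ((((i + j + 1 : ℕ) : ℂ))⁻¹ * ((Nat.choose l j : ℂ) * (-z1)^(l-j))) *
          ((C z1 + X)^(i+j+1) - C (z1^(i+j+1))))
        = (C z1 + X)^i * ((C z1 + X)^j * (C (-z1))^(l-j) * ((Nat.choose l j : ℕ) : Polynomial ℂ)) := by
      intro j _
      rw [derivative_C_mul, derivative_sub, derivative_C, sub_zero, derivative_pow,
        derivative_add, derivative_C, derivative_X, zero_add, mul_one]
      have h0 : (((i+j+1 : ℕ)) : ℂ) ≠ 0 := Nat.cast_ne_zero.2 (by omega)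
      have hC : (C ((((i + j + 1 : ℕ) : ℂ))⁻¹ * ((Nat.choose l j : ℂ) * (-z1)^(l-j)))) *
          C (((i+j+1 : ℕ)) : ℂ) = C ((Nat.choose l j : ℂ) * (-z1)^(l-j)) := by
        rw [← C_mul]
        congr 1
        rw [mul_comm, ← mul_assoc, mul_inv_cancel₀ h0, one_mul]
      simp only [Nat.add_sub_cancel]
      rw [← mul_assoc, hC, C_mul, Polynomial.C_eq_natCast, map_pow, pow_add]
      ring
    rw [Finset.sum_congr rfl hterm, ← Finset.mul_sum]
    congr 1
    have hap := (add_pow (C z1 + X) (C (-z1)) l).symm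
    have hx : (C z1 + X) + C (-z1) = (X : Polynomial ℂ) := by
      rw [map_neg]; ring
    rw [hap, hx]
  have hdB : derivative B = (C z1 + X)^i * X^l := by
    rw [hB, derivative_sum]
    have hterm : ∀ r ∈ Finset.range (i+1),
        derivative (C ((Nat.choose i r : ℂ) * z1^(i-r) * (((r+l+1 : ℕ):ℂ))⁻¹) * X^(r+l+1))
        = (X^r * (C z1)^(i-r) * ((Nat.choose i r : ℕ) : Polynomial ℂ)) * X^l := by
      intro r _
      rw [derivative_C_mul, derivative_X_pow]
      have h0 : (((r+l+1 : ℕ)) : ℂ) ≠ 0 := Nat.cast_ne_zero.2 (by omega)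
      have hC : (C ((Nat.choose i r : ℂ) * z1^(i-r) * (((r+l+1 : ℕ):ℂ))⁻¹)) *
          C (((r+l+1 : ℕ)) : ℂ) = C ((Nat.choose i r : ℂ) * z1^(i-r)) := by
        rw [← C_mul]
        congr 1
        rw [mul_assoc, inv_mul_cancel₀ h0, mul_one]
      simp only [Nat.add_sub_cancel]
      rw [← mul_assoc, hC, C_mul, Polynomial.C_eq_natCast, map_pow, pow_add]
      ring
    rw [Finset.sum_congr rfl hterm, ← Finset.sum_mul]
    congr 1
    have hap := (add_pow (X : Polynomial ℂ) (C z1) i).symm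
    rw [hap, add_comm]
  have hd0 : derivative (A - B) = 0 := by rw [derivative_sub, hdA, hdB, sub_self]
  have hdeg : (A - B).natDegree = 0 := natDegree_eq_zero_of_derivative_eq_zero hd0
  have hAB : A - B = C ((A - B).coeff 0) := Polynomial.eq_C_of_natDegree_eq_zero hdeg
  have hev : (A - B).eval 0 = 0 := by
    rw [Polynomial.eval_sub, hA, hB]
    rw [Polynomial.eval_finset_sum, Polynomial.eval_finset_sum]
    simp [zero_pow]
  rw [Polynomial.coeff_zero_eq_eval_zero, hev, map_zero] at hAB
  have := sub_eq_zero.1 hAB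
  exact this

noncomputable def μf (l : ℕ) : ℕ → ℂ := Classical.choose (exists_mu l)

lemma μf_self (l : ℕ) : μf l l = 1 := (Classical.choose_spec (exists_mu l)).1

noncomputable def νf (l r : ℕ) : ℂ :=
  ∑ j ∈ Finset.range (l+1), μf l j * (((r + j + 1 : ℕ) : ℂ))⁻¹

lemma νf_eq_zero {l r : ℕ} (h : r < l) : νf l r = 0 :=
  (Classical.choose_spec (exists_mu l)).2 r h

lemma stage2 (z1 : ℂ) (i l : ℕ) :
    ∑ m ∈ Finset.range (l+1),
      (∑ r ∈ Finset.range (i+1),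
        C ((Nat.choose i r : ℂ) * z1^(i-r) * (((r+m+1 : ℕ):ℂ))⁻¹) * X^(r+m+1)) *
        (C (μf l m) * X^(l-m))
    = (∑ r ∈ Finset.Ico l (i+1),
        C ((Nat.choose i r : ℂ) * z1^(i-r) * νf l r) * X^(r-l)) * X^(2*l+1) := by
  have hL : ∀ m ∈ Finset.range (l+1),
      (∑ r ∈ Finset.range (i+1),
        C ((Nat.choose i r : ℂ) * z1^(i-r) * (((r+m+1 : ℕ):ℂ))⁻¹) * X^(r+m+1)) *
        (C (μf l m) * X^(l-m))
      = ∑ r ∈ Finset.range (i+1),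
        C ((Nat.choose i r : ℂ) * z1^(i-r) * (μf l m * (((r+m+1 : ℕ):ℂ))⁻¹)) * X^(r+l+1) := by
    intro m hm
    rw [Finset.sum_mul]
    refine Finset.sum_congr rfl ?_
    intro r _
    have hexp : (r+m+1) + (l-m) = r+l+1 := by
      have := Finset.mem_range.1 hm; omega
    rw [← hexp, pow_add]
    simp only [C_mul]
    ring
  rw [Finset.sum_congr rfl hL, Finset.sum_comm]
  have hR : ∀ r ∈ Finset.range (i+1),
      (∑ m ∈ Finset.range (l+1),
        C ((Nat.choose i r : ℂ) * z1^(i-r) * (μf l m * (((r+m+1 : ℕ):ℂ))⁻¹)) * X^(r+l+1))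
      = C ((Nat.choose i r : ℂ) * z1^(i-r) * νf l r) * X^(r+l+1) := by
    intro r _
    rw [← Finset.sum_mul]
    congr 1
    rw [← map_sum, ← Finset.mul_sum]
    rfl
  rw [Finset.sum_congr rfl hR, Finset.sum_mul]
  have hR2 : ∀ r ∈ Finset.Ico l (i+1),
      C ((Nat.choose i r : ℂ) * z1^(i-r) * νf l r) * X^(r-l) * X^(2*l+1)
      = C ((Nat.choose i r : ℂ) * z1^(i-r) * νf l r) * X^(r+l+1) := by
    intro r hr
    rw [mul_assoc, ← pow_add]
    congr 2
    have := Finset.mem_Ico.1 hr; omega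
  rw [Finset.sum_congr rfl hR2]
  refine (Finset.sum_subset ?_ ?_).symm
  · intro r hr; exact Finset.mem_range.2 (Finset.mem_Ico.1 hr).2
  · intro r hr hni
    have hrl : r < l := by
      have h1 := Finset.mem_range.1 hr
      by_contra hc
      exact hni (Finset.mem_Ico.2 ⟨by omega, h1⟩)
    rw [νf_eq_zero hrl, mul_zero, map_zero, zero_mul]

noncomputable def MUmat (k : ℕ) (z1 z3 : ℂ) :
    Matrix (Fin (2*k)) (Fin (2*k)) (Polynomial ℂ) :=
  Matrix.of fun i j =>
    if (j : ℕ) < k then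
      C ((((i : ℕ) + (j : ℕ) + 1 : ℕ) : ℂ)⁻¹) *
        ((C z1 + X)^((i:ℕ)+(j:ℕ)+1) - C (z1^((i:ℕ)+(j:ℕ)+1)))
    else
      C ((z3 ^ ((i:ℕ) + ((j:ℕ) - k) + 1) - z1 ^ ((i:ℕ) + ((j:ℕ) - k) + 1)) /
          (((i:ℕ) + ((j:ℕ) - k) + 1 : ℕ) : ℂ))

noncomputable def G1 (k : ℕ) (z1 : ℂ) :
    Matrix (Fin (2*k)) (Fin (2*k)) (Polynomial ℂ) :=
  Matrix.of fun j' l =>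
    if (l : ℕ) < k then
      (if (j' : ℕ) ≤ (l : ℕ) then
        C ((Nat.choose (l:ℕ) (j':ℕ) : ℂ) * (-z1)^((l:ℕ)-(j':ℕ))) else 0)
    else (if j' = l then 1 else 0)

noncomputable def Cmat (k : ℕ) (z1 z3 : ℂ) :
    Matrix (Fin (2*k)) (Fin (2*k)) (Polynomial ℂ) :=
  Matrix.of fun i l =>
    if (l : ℕ) < k then
      ∑ r ∈ Finset.range ((i:ℕ)+1),
        C ((Nat.choose (i:ℕ) r : ℂ) * z1^((i:ℕ)-r) * (((r+(l:ℕ)+1 : ℕ):ℂ))⁻¹) * X^(r+(l:ℕ)+1)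
    else MUmat k z1 z3 i l

noncomputable def G2 (k : ℕ) :
    Matrix (Fin (2*k)) (Fin (2*k)) (Polynomial ℂ) :=
  Matrix.of fun j l =>
    if (l : ℕ) < k then
      (if (j : ℕ) ≤ (l : ℕ) then C (μf (l:ℕ) (j:ℕ)) * X^((l:ℕ)-(j:ℕ)) else 0)
    else (if j = l then 1 else 0)

noncomputable def Fmat (k : ℕ) (z1 z3 : ℂ) :
    Matrix (Fin (2*k)) (Fin (2*k)) (Polynomial ℂ) :=
  Matrix.of fun i l =>
    if (l : ℕ) < k then
      ∑ r ∈ Finset.Ico (l:ℕ) ((i:ℕ)+1),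
        C ((Nat.choose (i:ℕ) r : ℂ) * z1^((i:ℕ)-r) * νf (l:ℕ) r) * X^(r-(l:ℕ))
    else MUmat k z1 z3 i l

noncomputable def Dmat (k : ℕ) :
    Matrix (Fin (2*k)) (Fin (2*k)) (Polynomial ℂ) :=
  Matrix.diagonal fun l => if (l:ℕ) < k then (X : Polynomial ℂ)^(2*(l:ℕ)+1) else 1

lemma claim1 (k : ℕ) (z1 z3 : ℂ) : MUmat k z1 z3 * G1 k z1 = Cmat k z1 z3 := by
  refine Matrix.ext (fun i l => ?_)
  rw [Matrix.mul_apply]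
  by_cases hl : (l : ℕ) < k
  · set h : ℕ → Polynomial ℂ := fun m =>
      if m ≤ (l:ℕ) then
        C ((((i:ℕ) + m + 1 : ℕ) : ℂ)⁻¹ * ((Nat.choose (l:ℕ) m : ℂ) * (-z1)^((l:ℕ)-m))) *
          ((C z1 + X)^((i:ℕ)+m+1) - C (z1^((i:ℕ)+m+1)))
      else 0 with hh
    have hconv : ∀ j' : Fin (2*k), MUmat k z1 z3 i j' * G1 k z1 j' l = h (j' : ℕ) := by
      intro j'
      by_cases hj : (j' : ℕ) ≤ (l : ℕ)
      · have hjk : (j' : ℕ) < k := lt_of_le_of_lt hj hl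
        simp only [hh, MUmat, G1, Matrix.of_apply, if_pos hjk, if_pos hl, if_pos hj, C_mul]
        ring
      · simp only [hh, MUmat, G1, Matrix.of_apply, if_pos hl, if_neg hj, mul_zero]
    calc ∑ j' : Fin (2*k), MUmat k z1 z3 i j' * G1 k z1 j' l
        = ∑ j' : Fin (2*k), h (j' : ℕ) := Finset.sum_congr rfl fun j' _ => hconv j'
      _ = ∑ m ∈ Finset.range (2*k), h m := Fin.sum_univ_eq_sum_range h (2*k)
      _ = ∑ m ∈ Finset.range ((l:ℕ)+1), h m := by
          refine (Finset.sum_subset (Finset.range_subset_range.2 (by omega)) ?_).symm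
          intro m _ hm
          rw [Finset.mem_range] at hm
          rw [hh]
          exact if_neg (by omega)
      _ = ∑ m ∈ Finset.range ((l:ℕ)+1),
            C ((((i:ℕ) + m + 1 : ℕ) : ℂ)⁻¹ * ((Nat.choose (l:ℕ) m : ℂ) * (-z1)^((l:ℕ)-m))) *
              ((C z1 + X)^((i:ℕ)+m+1) - C (z1^((i:ℕ)+m+1))) := by
          refine Finset.sum_congr rfl ?_
          intro m hm
          rw [Finset.mem_range] at hm
          rw [hh]
          exact if_pos (by omega)
      _ = ∑ r ∈ Finset.range ((i:ℕ)+1),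
            C ((Nat.choose (i:ℕ) r : ℂ) * z1^((i:ℕ)-r) * (((r+(l:ℕ)+1 : ℕ):ℂ))⁻¹) *
              X^(r+(l:ℕ)+1) := stage1 z1 (i:ℕ) (l:ℕ)
      _ = Cmat k z1 z3 i l := by rw [Cmat, Matrix.of_apply, if_pos hl]
  · have : ∀ j' : Fin (2*k), MUmat k z1 z3 i j' * G1 k z1 j' l
        = if j' = l then MUmat k z1 z3 i j' else 0 := by
      intro j'
      simp only [G1, Matrix.of_apply, if_neg hl]
      split_ifs <;> simp
    rw [Finset.sum_congr rfl fun j' _ => this j', Finset.sum_ite_eq' Finset.univ l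
      (fun j' => MUmat k z1 z3 i j'), if_pos (Finset.mem_univ l)]
    rw [Cmat, Matrix.of_apply, if_neg hl]

lemma claim2 (k : ℕ) (z1 z3 : ℂ) : Cmat k z1 z3 * G2 k = Fmat k z1 z3 * Dmat k := by
  refine Matrix.ext (fun i l => ?_)
  rw [Matrix.mul_apply, Dmat, Matrix.mul_diagonal]
  by_cases hl : (l : ℕ) < k
  · rw [if_pos hl]
    set h : ℕ → Polynomial ℂ := fun m =>
      if m ≤ (l:ℕ) then
        (∑ r ∈ Finset.range ((i:ℕ)+1),
          C ((Nat.choose (i:ℕ) r : ℂ) * z1^((i:ℕ)-r) * (((r+m+1 : ℕ):ℂ))⁻¹) * X^(r+m+1)) *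
          (C (μf (l:ℕ) m) * X^((l:ℕ)-m))
      else 0 with hh
    have hconv : ∀ j : Fin (2*k), Cmat k z1 z3 i j * G2 k j l = h (j : ℕ) := by
      intro j
      by_cases hj : (j : ℕ) ≤ (l : ℕ)
      · have hjk : (j : ℕ) < k := lt_of_le_of_lt hj hl
        simp only [hh, Cmat, G2, Matrix.of_apply, if_pos hjk, if_pos hl, if_pos hj]
      · simp only [hh, Cmat, G2, Matrix.of_apply, if_pos hl, if_neg hj, mul_zero]
    calc ∑ j : Fin (2*k), Cmat k z1 z3 i j * G2 k j l
        = ∑ j : Fin (2*k), h (j : ℕ) := Finset.sum_congr rfl fun j _ => hconv j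
      _ = ∑ m ∈ Finset.range (2*k), h m := Fin.sum_univ_eq_sum_range h (2*k)
      _ = ∑ m ∈ Finset.range ((l:ℕ)+1), h m := by
          refine (Finset.sum_subset (Finset.range_subset_range.2 (by omega)) ?_).symm
          intro m _ hm
          rw [Finset.mem_range] at hm
          rw [hh]
          exact if_neg (by omega)
      _ = ∑ m ∈ Finset.range ((l:ℕ)+1),
            (∑ r ∈ Finset.range ((i:ℕ)+1),
              C ((Nat.choose (i:ℕ) r : ℂ) * z1^((i:ℕ)-r) * (((r+m+1 : ℕ):ℂ))⁻¹) * X^(r+m+1)) *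
              (C (μf (l:ℕ) m) * X^((l:ℕ)-m)) := by
          refine Finset.sum_congr rfl ?_
          intro m hm
          rw [Finset.mem_range] at hm
          rw [hh]
          exact if_pos (by omega)
      _ = (∑ r ∈ Finset.Ico (l:ℕ) ((i:ℕ)+1),
            C ((Nat.choose (i:ℕ) r : ℂ) * z1^((i:ℕ)-r) * νf (l:ℕ) r) * X^(r-(l:ℕ))) *
            X^(2*(l:ℕ)+1) := stage2 z1 (i:ℕ) (l:ℕ)
      _ = Fmat k z1 z3 i l * X^(2*(l:ℕ)+1) := by rw [Fmat, Matrix.of_apply, if_pos hl]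
  · rw [if_neg hl]
    have : ∀ j : Fin (2*k), Cmat k z1 z3 i j * G2 k j l
        = if j = l then Cmat k z1 z3 i j else 0 := by
      intro j
      simp only [G2, Matrix.of_apply, if_neg hl]
      split_ifs <;> simp
    rw [Finset.sum_congr rfl fun j _ => this j, Finset.sum_ite_eq' Finset.univ l
      (fun j => Cmat k z1 z3 i j), if_pos (Finset.mem_univ l)]
    rw [Cmat, Fmat, Matrix.of_apply, Matrix.of_apply, if_neg hl, if_neg hl, mul_one]

lemma detG1 (k : ℕ) (z1 : ℂ) : (G1 k z1).det = 1 := by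
  rw [Matrix.det_of_upperTriangular]
  · refine Finset.prod_eq_one ?_
    intro l _
    by_cases hl : (l : ℕ) < k
    · simp [G1, if_pos hl, Nat.choose_self]
    · simp [G1, if_neg hl]
  · intro i j hij
    have hij' : (j : ℕ) < (i : ℕ) := hij
    simp only [G1, Matrix.of_apply]
    by_cases hj : (j : ℕ) < k
    · rw [if_pos hj, if_neg (by omega)]
    · rw [if_neg hj, if_neg (by intro hc; rw [hc] at hij'; omega)]

lemma detG2 (k : ℕ) : (G2 k).det = 1 := by
  rw [Matrix.det_of_upperTriangular]
  · refine Finset.prod_eq_one ?_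
    intro l _
    by_cases hl : (l : ℕ) < k
    · simp [G2, if_pos hl, μf_self]
    · simp [G2, if_neg hl]
  · intro i j hij
    have hij' : (j : ℕ) < (i : ℕ) := hij
    simp only [G2, Matrix.of_apply]
    by_cases hj : (j : ℕ) < k
    · rw [if_pos hj, if_neg (by omega)]
    · rw [if_neg hj, if_neg (by intro hc; rw [hc] at hij'; omega)]

lemma sum_odd (k : ℕ) : ∑ m ∈ Finset.range k, (2*m+1) = k^2 := by
  induction k with
  | zero => simp
  | succ n ih => rw [Finset.sum_range_succ, ih]; ring

lemma detD (k : ℕ) : (Dmat k).det = X^(k^2) := by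
  rw [Dmat, Matrix.det_diagonal]
  rw [Fin.prod_univ_eq_prod_range (fun m => if m < k then (X : Polynomial ℂ)^(2*m+1) else 1) (2*k)]
  rw [← Finset.prod_subset (Finset.range_subset_range.2 (by omega : k ≤ 2*k))
    (fun m _ hm => by rw [Finset.mem_range] at hm; exact if_neg (by omega))]
  rw [Finset.prod_congr rfl (fun m hm => if_pos (Finset.mem_range.1 hm))]
  rw [Finset.prod_pow_eq_pow_sum, sum_odd]

lemma key (k : ℕ) (z1 z3 : ℂ) :
    (MUmat k z1 z3).det = X^(k^2) * (Fmat k z1 z3).det := by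
  have h1 : MUmat k z1 z3 * G1 k z1 * G2 k = Fmat k z1 z3 * Dmat k := by
    rw [claim1, claim2]
  have h2 := congrArg Matrix.det h1
  rw [Matrix.det_mul, Matrix.det_mul, Matrix.det_mul, detG1, detG2, detD] at h2
  rw [mul_one, mul_one] at h2
  rw [h2, mul_comm]

lemma mapMU (k : ℕ) (z1 z3 x : ℂ) :
    (MUmat k z1 z3).map (Polynomial.evalRingHom (x - z1)) = Mmat k z1 x z3 := by
  refine Matrix.ext (fun i j => ?_)
  simp only [Matrix.map_apply, MUmat, Mmat, Matrix.of_apply]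
  by_cases hj : (j:ℕ) < k
  · rw [if_pos hj, if_pos hj]
    simp only [coe_evalRingHom, eval_mul, eval_C, eval_sub, eval_pow, eval_add, eval_X]
    rw [div_eq_mul_inv]
    ring
  · rw [if_neg hj, if_neg hj]
    simp [coe_evalRingHom]

lemma part1 (k : ℕ) (z1 z3 : ℂ) :
    ∃ g : Polynomial ℂ, ∀ x : ℂ,
      Matrix.det (Mmat k z1 x z3) = (x - z1) ^ (k ^ 2) * g.eval x := by
  refine ⟨(Fmat k z1 z3).det.comp (Polynomial.X - C z1), ?_⟩
  intro x
  have h0 : Matrix.det (Mmat k z1 x z3)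
      = (Polynomial.evalRingHom (x - z1)) (MUmat k z1 z3).det := by
    rw [RingHom.map_det, RingHom.mapMatrix_apply, mapMU]
  rw [h0, key]
  simp only [map_mul, map_pow, coe_evalRingHom, eval_X, eval_comp, eval_sub, eval_C]

theorem det_Mmat_divisibility (k : ℕ) (hk : 1 ≤ k) (z1 z2 z3 : ℂ) :
    (∃ g : Polynomial ℂ, ∀ X : ℂ,
      Matrix.det (Mmat k z1 X z3) = (X - z1) ^ (k ^ 2) * g.eval X) ∧
    (∃ g : Polynomial ℂ, ∀ X : ℂ,
      Matrix.det (Mmat k z1 z2 X) = (X - z1) ^ (k ^ 2) * g.eval X) := by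
  refine ⟨part1 k z1 z3, ?_⟩
  obtain ⟨g2, hg2⟩ := part1 k z1 z2
  haveI : NeZero (2*k) := ⟨by omega⟩
  set κ : Fin (2*k) := ⟨k, by omega⟩ with hκ
  set e : Equiv.Perm (Fin (2*k)) := Equiv.addRight κ with he
  have hval : ∀ j : Fin (2*k), ((e j : Fin (2*k)) : ℕ)
      = if (j:ℕ) < k then (j:ℕ) + k else (j:ℕ) - k := by
    intro j
    have h1 : ((e j : Fin (2*k)) : ℕ) = ((j:ℕ) + k) % (2*k) := by
      simp [he, hκ, Equiv.addRight, Fin.add_def]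
    rw [h1]
    by_cases hj : (j:ℕ) < k
    · rw [if_pos hj, Nat.mod_eq_of_lt (by omega)]
    · rw [if_neg hj]
      have hj2 : (j:ℕ) < 2*k := j.isLt
      rw [Nat.mod_eq_sub_mod (by omega)]
      have h3 : (j:ℕ) + k - 2*k = (j:ℕ) - k := by omega
      rw [h3, Nat.mod_eq_of_lt (by omega)]
  have hswap : ∀ x : ℂ, Mmat k z1 z2 x = (Mmat k z1 x z2).submatrix id e := by
    intro x
    refine Matrix.ext (fun i j => ?_)
    simp only [Matrix.submatrix_apply, id_eq]
    by_cases hj : (j:ℕ) < k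
    · have hv : ((e j : Fin (2*k)) : ℕ) = (j:ℕ) + k := by rw [hval, if_pos hj]
      simp only [Mmat, Matrix.of_apply, hv, if_pos hj, if_neg (by omega : ¬ ((j:ℕ) + k < k)),
        Nat.add_sub_cancel]
    · have hv : ((e j : Fin (2*k)) : ℕ) = (j:ℕ) - k := by rw [hval, if_neg hj]
      have hjk : (j:ℕ) - k < k := by have := j.isLt; omega
      simp only [Mmat, Matrix.of_apply, hv, if_neg hj, if_pos hjk]
  refine ⟨C (((Equiv.Perm.sign e : ℤ) : ℂ)) * g2, ?_⟩
  intro x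
  rw [hswap x, Matrix.det_permute', hg2 x]
  simp only [eval_mul, eval_C]
  ring
end
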